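/- arXiv:2411.06380 — 5 statements merged into one kernel-verified Lean document; each statement's English description precedes it below -/
import Mathlib

section
/- Define the Riccati map 𝔉(X) = X − X Cᵀ (C X Cᵀ + R)⁻¹ C X on positive semidefinite matrices, where R > 0. If X ≥ Y ≥ 0, then 𝔉(X) ≥ 𝔉(Y). -/
open Matrix

/-- Pure matrix identity underlying Riccati monotonicity. -/
lemma riccati_aux {N M : Type*} [Fintype N] [Fintype M] [DecidableEq N] [DecidableEq M]
    (x y : Matrix N N ℝ) (b : Matrix N M ℝ) (c : Matrix M N ℝ) (p q t : Matrix M M ℝ)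
    (hpt : p * t = 1 - p * (c * (x * b)) + p * (c * (y * b)))
    (hqt : q * t = 1) (htq : t * q = 1) :
    (1 - x * b * p * c) * (x - y) * (1 - b * (p * (c * x)))
      + (x * b * p - y * b * q) * t * (p * (c * x) - q * (c * y))
    = (x - x * b * p * c * x) - (y - y * b * q * c * y) := by
  have h1 : (x * b * p - y * b * q) * t
      = x * b * (1 - p * (c * (x * b)) + p * (c * (y * b))) - y * b := by
    have e : (x * b * p - y * b * q) * t = x * b * (p * t) - y * b * (q * t) := by
      simp [Matrix.sub_mul, Matrix.mul_assoc]
    rw [e, hpt, hqt, Matrix.mul_one]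
  have h2 : (x * b * p - y * b * q) * (t * q) = x * b * p - y * b * q := by
    rw [htq, Matrix.mul_one]
  have e2 : (x * b * p - y * b * q) * t * (p * (c * x) - q * (c * y))
      = ((x * b * p - y * b * q) * t) * (p * (c * x))
        - ((x * b * p - y * b * q) * (t * q)) * (c * y) := by
    simp only [Matrix.mul_sub, Matrix.sub_mul, Matrix.mul_assoc]
    try abel
  rw [e2, h1, h2]
  simp only [Matrix.mul_sub, Matrix.sub_mul, Matrix.mul_add, Matrix.add_mul,
    Matrix.mul_one, Matrix.one_mul, Matrix.mul_assoc]
  try abel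

/-- Monotonicity of the Riccati measurement-update map
`𝔉(X) = X − X Cᵀ (C X Cᵀ + R)⁻¹ C X` in the Loewner order: if `X ≥ Y ≥ 0` then
`𝔉(X) ≥ 𝔉(Y)`. -/
theorem riccati_update_monotone (n m : ℕ) (C : Matrix (Fin m) (Fin n) ℝ)
    (R : Matrix (Fin m) (Fin m) ℝ) (hR : R.PosDef)
    (X Y : Matrix (Fin n) (Fin n) ℝ) (hX : X.PosSemidef) (hY : Y.PosSemidef)
    (hXY : (X - Y).PosSemidef) :
    ((X - X * Cᵀ * (C * X * Cᵀ + R)⁻¹ * C * X)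
      - (Y - Y * Cᵀ * (C * Y * Cᵀ + R)⁻¹ * C * Y)).PosSemidef := by
  set S : Matrix (Fin m) (Fin m) ℝ := C * X * Cᵀ + R with hSdef
  set T : Matrix (Fin m) (Fin m) ℝ := C * Y * Cᵀ + R with hTdef
  have hCX : (C * X * Cᵀ).PosSemidef := by
    simpa [Matrix.conjTranspose_eq_transpose_of_trivial] using
      hX.mul_mul_conjTranspose_same C
  have hCY : (C * Y * Cᵀ).PosSemidef := by
    simpa [Matrix.conjTranspose_eq_transpose_of_trivial] using
      hY.mul_mul_conjTranspose_same C
  have hS : S.PosDef := Matrix.PosDef.posSemidef_add hCX hR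
  have hT : T.PosDef := Matrix.PosDef.posSemidef_add hCY hR
  have hSinv : S * S⁻¹ = 1 := by
    have := hS.isUnit.invertible
    exact Matrix.mul_inv_of_invertible S
  have hinvS : S⁻¹ * S = 1 := by
    have := hS.isUnit.invertible
    exact Matrix.inv_mul_of_invertible S
  have hTinv : T * T⁻¹ = 1 := by
    have := hT.isUnit.invertible
    exact Matrix.mul_inv_of_invertible T
  have hinvT : T⁻¹ * T = 1 := by
    have := hT.isUnit.invertible
    exact Matrix.inv_mul_of_invertible T
  -- transposes
  have hXT : Xᵀ = X := by
    have := hX.1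
    rwa [Matrix.IsHermitian, Matrix.conjTranspose_eq_transpose_of_trivial] at this
  have hYT : Yᵀ = Y := by
    have := hY.1
    rwa [Matrix.IsHermitian, Matrix.conjTranspose_eq_transpose_of_trivial] at this
  have hST : Sᵀ = S := by
    have := hS.1
    rwa [Matrix.IsHermitian, Matrix.conjTranspose_eq_transpose_of_trivial] at this
  have hTT : Tᵀ = T := by
    have := hT.1
    rwa [Matrix.IsHermitian, Matrix.conjTranspose_eq_transpose_of_trivial] at this
  have hSinvT : (S⁻¹)ᵀ = S⁻¹ := by rw [Matrix.transpose_nonsing_inv, hST]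
  have hTinvT : (T⁻¹)ᵀ = T⁻¹ := by rw [Matrix.transpose_nonsing_inv, hTT]
  -- the two gain matrices
  set A : Matrix (Fin n) (Fin n) ℝ := 1 - X * Cᵀ * S⁻¹ * C with hAdef
  set D : Matrix (Fin n) (Fin m) ℝ := X * Cᵀ * S⁻¹ - Y * Cᵀ * T⁻¹ with hDdef
  have hAT : Aᵀ = 1 - Cᵀ * (S⁻¹ * (C * X)) := by
    simp [hAdef, Matrix.transpose_sub, Matrix.transpose_mul, hSinvT, hXT, Matrix.mul_assoc]
  have hDT : Dᵀ = S⁻¹ * (C * X) - T⁻¹ * (C * Y) := by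
    simp [hDdef, Matrix.transpose_sub, Matrix.transpose_mul, hSinvT, hTinvT, hXT, hYT,
      Matrix.mul_assoc]
  have hpt : S⁻¹ * T = 1 - S⁻¹ * (C * (X * Cᵀ)) + S⁻¹ * (C * (Y * Cᵀ)) := by
    have : T = S - C * (X * Cᵀ) + C * (Y * Cᵀ) := by
      rw [hTdef, hSdef]; noncomm_ring [Matrix.mul_assoc]
    rw [this, Matrix.mul_add, Matrix.mul_sub, hinvS]
  have key : ((X - X * Cᵀ * (C * X * Cᵀ + R)⁻¹ * C * X)
      - (Y - Y * Cᵀ * (C * Y * Cᵀ + R)⁻¹ * C * Y))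
      = A * (X - Y) * Aᵀ + D * T * Dᵀ := by
    rw [hAT, hDT, hAdef, hDdef]
    exact (riccati_aux X Y Cᵀ C S⁻¹ T⁻¹ T hpt hinvT hTinv).symm
  rw [key]
  apply Matrix.PosSemidef.add
  · have := hXY.mul_mul_conjTranspose_same A
    simpa [Matrix.conjTranspose_eq_transpose_of_trivial] using this
  · have := hT.posSemidef.mul_mul_conjTranspose_same D
    simpa [Matrix.conjTranspose_eq_transpose_of_trivial] using this
end

section
/- Define 𝔉(X) = X − X Cᵀ (C X Cᵀ + R)⁻¹ C X with R > 0, and let α ≥ 1 be a scalar. Then for any X ≥ 0, 𝔉(αX) ≤ α·𝔉(X). -/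
/-!
Write `𝔉_R` for the update with noise covariance `R`. Scaling the prior by `α` is the same as
scaling the noise by `α⁻¹`: `𝔉_R(αX) = α • 𝔉_{α⁻¹R}(X)`. The update is monotone in the noise,
because `α⁻¹R ≤ R` gives `(CXCᴴ + α⁻¹R)⁻¹ ≥ (CXCᴴ + R)⁻¹` (matrix inversion is Loewner
antitone, via Schur complements), and the difference of the two updates is that gap of
inverses conjugated by `XCᴴ`.
-/

open Matrix

variable {K m n : Type*} [Field K] [Fintype m] [DecidableEq m] [Fintype n]

-- No invertibility hypothesis is needed: for singular `A` both sides are the junk value `0`.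
theorem Matrix.inv_smul₀ (k : K) (A : Matrix m m K) : (k • A)⁻¹ = k⁻¹ • A⁻¹ := by
  rcases eq_or_ne k 0 with rfl | hk
  · simp
  by_cases hA : IsUnit A.det
  · exact inv_smul' A (Units.mk0 k hk) hA
  · have hkA : ¬IsUnit (k • A).det := by simpa [det_smul, hk] using hA
    rw [nonsing_inv_apply_not_isUnit _ hA, nonsing_inv_apply_not_isUnit _ hkA, smul_zero]

section StarRing

variable [StarRing K]

noncomputable def riccatiUpdate (C : Matrix m n K) (R : Matrix m m K) (X : Matrix n n K) :
    Matrix n n K :=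
  X - X * Cᴴ * (C * X * Cᴴ + R)⁻¹ * C * X

theorem riccatiUpdate_smul (C : Matrix m n K) (R : Matrix m m K) (X : Matrix n n K)
    {α : K} (hα : α ≠ 0) :
    riccatiUpdate C R (α • X) = α • riccatiUpdate C (α⁻¹ • R) X := by
  have hscale : C * (α • X) * Cᴴ + R = α • (C * X * Cᴴ + α⁻¹ • R) := by
    rw [smul_add, smul_smul, mul_inv_cancel₀ hα, one_smul, Matrix.mul_smul, Matrix.smul_mul]
  rw [riccatiUpdate, riccatiUpdate, hscale, inv_smul₀]
  simp only [Matrix.smul_mul, Matrix.mul_smul, smul_smul, smul_sub, inv_mul_cancel₀ hα, mul_one]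

variable [PartialOrder K] [StarOrderedRing K]

theorem Matrix.PosDef.posSemidef_inv_sub_inv {A B : Matrix m m K} (hA : A.PosDef)
    (hAB : (B - A).PosSemidef) : (A⁻¹ - B⁻¹).PosSemidef := by
  have hB : B.PosDef := by simpa using hA.add_posSemidef hAB
  let _ := hA.isUnit.invertible
  let _ := hB.isUnit.invertible
  let _ := hA.inv.isUnit.invertible
  have hblock : (fromBlocks B 1 (1 : Matrix m m K)ᴴ A⁻¹).PosSemidef := by
    rw [PosDef.fromBlocks₂₂ _ _ hA.inv]
    simpa using hAB
  simpa using (PosDef.fromBlocks₁₁ _ _ hB).mp hblock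

theorem posSemidef_riccatiUpdate_sub_riccatiUpdate (C : Matrix m n K) {X : Matrix n n K}
    (hX : X.PosSemidef) {R₁ R₂ : Matrix m m K} (hR₁ : R₁.PosDef) (hR : (R₂ - R₁).PosSemidef) :
    (riccatiUpdate C R₂ X - riccatiUpdate C R₁ X).PosSemidef := by
  have hS₁ : (C * X * Cᴴ + R₁).PosDef :=
    PosDef.posSemidef_add (hX.mul_mul_conjTranspose_same C) hR₁
  have hinv := hS₁.posSemidef_inv_sub_inv (B := C * X * Cᴴ + R₂) (by simpa using hR)
  have hXC : (X * Cᴴ)ᴴ = C * X := by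
    rw [conjTranspose_mul, conjTranspose_conjTranspose, hX.isHermitian.eq]
  convert hinv.mul_mul_conjTranspose_same (X * Cᴴ) using 1
  simp only [riccatiUpdate, hXC, Matrix.mul_sub, Matrix.sub_mul, Matrix.mul_assoc]
  abel

end StarRing

/-- Sub-homogeneity of the Riccati measurement-update map
`𝔉(X) = X − X Cᵀ (C X Cᵀ + R)⁻¹ C X`: for any scalar `α ≥ 1` and any `X ≥ 0`,
`𝔉(αX) ≤ α·𝔉(X)` in the Loewner order. -/
theorem riccati_update_subhomogeneous (n m : ℕ) (C : Matrix (Fin m) (Fin n) ℝ)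
    (R : Matrix (Fin m) (Fin m) ℝ) (hR : R.PosDef)
    (X : Matrix (Fin n) (Fin n) ℝ) (hX : X.PosSemidef) (α : ℝ) (hα : 1 ≤ α) :
    (α • (X - X * Cᵀ * (C * X * Cᵀ + R)⁻¹ * C * X)
      - ((α • X) - (α • X) * Cᵀ * (C * (α • X) * Cᵀ + R)⁻¹ * C * (α • X))).PosSemidef := by
  have hα₀ : 0 < α := zero_lt_one.trans_le hα
  have hnoise : (R - α⁻¹ • R).PosSemidef := by
    rw [show R - α⁻¹ • R = (1 - α⁻¹) • R by rw [sub_smul, one_smul]]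
    exact hR.posSemidef.smul (sub_nonneg.mpr (inv_le_one_of_one_le₀ hα))
  have key := (posSemidef_riccatiUpdate_sub_riccatiUpdate C hX (hR.smul (inv_pos.mpr hα₀))
    hnoise).smul hα₀.le
  rw [smul_sub, ← riccatiUpdate_smul C R X hα₀.ne'] at key
  simpa only [riccatiUpdate, conjTranspose_eq_transpose_of_trivial] using key
end

section
/- Let P̄ > 0, C ∈ ℝ^{m×n}, R > 0, K = P̄ Cᵀ (C P̄ Cᵀ + R)⁻¹, and P = P̄ − K C P̄. Then P − K R Kᵀ ≤ (P⁻¹ + Cᵀ R⁻¹ C)⁻¹ in the Loewner order. -/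
open Matrix

private lemma ctt {k l : ℕ} (A : Matrix (Fin k) (Fin l) ℝ) : Aᴴ = Aᵀ :=
  conjTranspose_eq_transpose_of_trivial A

private lemma psd_conj {k l : ℕ} {A : Matrix (Fin k) (Fin k) ℝ} (hA : A.PosSemidef)
    (B : Matrix (Fin k) (Fin l) ℝ) : (Bᵀ * A * B).PosSemidef := by
  have := hA.conjTranspose_mul_mul_same B
  rwa [ctt] at this

private lemma psd_conj' {k l : ℕ} {A : Matrix (Fin k) (Fin k) ℝ} (hA : A.PosSemidef)
    (B : Matrix (Fin l) (Fin k) ℝ) : (B * A * Bᵀ).PosSemidef := by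
  have := hA.mul_mul_conjTranspose_same B
  rwa [ctt] at this

private lemma wood {n m : ℕ} (Q : Matrix (Fin n) (Fin n) ℝ) (hQ : Q.PosDef)
    (C : Matrix (Fin m) (Fin n) ℝ) (R : Matrix (Fin m) (Fin m) ℝ) (hR : R.PosDef) :
    (Q⁻¹ + Cᵀ * R⁻¹ * C)⁻¹ = Q - Q * Cᵀ * (R + C * Q * Cᵀ)⁻¹ * C * Q := by
  have hQQ : Q⁻¹⁻¹ = Q := Matrix.nonsing_inv_nonsing_inv Q hQ.det_pos.ne'.isUnit
  have hRR : R⁻¹⁻¹ = R := Matrix.nonsing_inv_nonsing_inv R hR.det_pos.ne'.isUnit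
  have hU : IsUnit (R⁻¹⁻¹ + C * Q⁻¹⁻¹ * Cᵀ) := by
    rw [hQQ, hRR]
    exact (hR.add_posSemidef (psd_conj' hQ.posSemidef C)).isUnit
  have h := Matrix.add_mul_mul_inv_eq_sub Q⁻¹ Cᵀ R⁻¹ C hQ.inv.isUnit hR.inv.isUnit hU
  rw [hQQ, hRR] at h
  rw [h]

/-- With `K = P̄ Cᵀ (C P̄ Cᵀ + R)⁻¹` and `P = P̄ − K C P̄`, one has
`P − K R Kᵀ ≤ (P⁻¹ + Cᵀ R⁻¹ C)⁻¹` in the Loewner order. -/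
theorem update_minus_gain_le (n m : ℕ)
    (Pbar : Matrix (Fin n) (Fin n) ℝ) (hP : Pbar.PosDef)
    (C : Matrix (Fin m) (Fin n) ℝ) (R : Matrix (Fin m) (Fin m) ℝ) (hR : R.PosDef)
    (K : Matrix (Fin n) (Fin m) ℝ) (P : Matrix (Fin n) (Fin n) ℝ)
    (hK : K = Pbar * Cᵀ * (C * Pbar * Cᵀ + R)⁻¹)
    (hP2 : P = Pbar - K * C * Pbar) :
    ((P⁻¹ + Cᵀ * R⁻¹ * C)⁻¹ - (P - K * R * Kᵀ)).PosSemidef := by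
  have hS : (C * Pbar * Cᵀ + R).PosDef :=
    Matrix.PosDef.posSemidef_add (psd_conj' hP.posSemidef C) hR
  -- P as inverse (Woodbury)
  have hPeq : P = (Pbar⁻¹ + Cᵀ * R⁻¹ * C)⁻¹ := by
    rw [wood Pbar hP C R hR, hP2, hK, add_comm R]
  have hPpd : P.PosDef := by
    rw [hPeq]
    exact (hP.inv.add_posSemidef (psd_conj hR.inv.posSemidef C)).inv
  -- K = P Cᵀ R⁻¹
  have hRR : R * R⁻¹ = 1 := Matrix.mul_nonsing_inv R hR.det_pos.ne'.isUnit
  have hKS : K * (C * Pbar * Cᵀ) + K * R = Pbar * Cᵀ := by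
    rw [← Matrix.mul_add, hK, Matrix.mul_assoc (Pbar * Cᵀ),
      Matrix.nonsing_inv_mul _ hS.det_pos.ne'.isUnit, Matrix.mul_one]
  have hKP : K = P * Cᵀ * R⁻¹ := by
    have h1 : P * Cᵀ = K * R := by
      rw [hP2, Matrix.sub_mul]
      have h2 : K * C * Pbar * Cᵀ = Pbar * Cᵀ - K * R := by
        rw [Matrix.mul_assoc, Matrix.mul_assoc, ← Matrix.mul_assoc C]
        exact eq_sub_of_add_eq hKS
      rw [h2]
      abel
    rw [h1, Matrix.mul_assoc, hRR, Matrix.mul_one]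
  -- symmetry facts
  have hPs : Pᵀ = P := by rw [← ctt]; exact hPpd.isHermitian
  have hRs : Rᵀ = R := by rw [← ctt]; exact hR.isHermitian
  have hRis : (R⁻¹)ᵀ = R⁻¹ := by rw [Matrix.transpose_nonsing_inv, hRs]
  have hKT : Kᵀ = R⁻¹ * (C * P) := by
    rw [hKP, Matrix.transpose_mul, Matrix.transpose_mul, hRis, Matrix.transpose_transpose, hPs]
  have hKRK : K * R * Kᵀ = P * Cᵀ * R⁻¹ * C * P := by
    rw [hKT, hKP]
    simp only [Matrix.mul_assoc]
    rw [← Matrix.mul_assoc R R⁻¹, hRR, Matrix.one_mul]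
  -- Woodbury for P and for (R + C P Cᵀ)⁻¹
  set W := (P⁻¹ + Cᵀ * R⁻¹ * C)⁻¹ with hWdef
  have hWpd : W.PosDef :=
    (hPpd.inv.add_posSemidef (psd_conj hR.inv.posSemidef C)).inv
  have hT : (R + C * P * Cᵀ)⁻¹ = R⁻¹ - R⁻¹ * C * W * Cᵀ * R⁻¹ :=
    Matrix.add_mul_mul_inv_eq_sub R C P Cᵀ hR.isUnit hPpd.isUnit
      (hPpd.inv.add_posSemidef (psd_conj hR.inv.posSemidef C)).isUnit
  have hW1 : W = P - P * Cᵀ * (R⁻¹ - R⁻¹ * C * W * Cᵀ * R⁻¹) * C * P := by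
    conv_lhs => rw [hWdef, wood P hPpd C R hR, hT]
  have key : W - (P - K * R * Kᵀ) =
      (P * Cᵀ * R⁻¹ * C) * W * (Cᵀ * R⁻¹ * C * P) := by
    rw [hKRK]
    conv_lhs => rw [hW1]
    simp only [Matrix.mul_sub, Matrix.sub_mul, Matrix.mul_assoc]
    abel
  rw [key]
  have hM : (P * Cᵀ * R⁻¹ * C)ᵀ = Cᵀ * R⁻¹ * C * P := by
    rw [Matrix.transpose_mul, Matrix.transpose_mul, Matrix.transpose_mul, hRis, hPs,
      Matrix.transpose_transpose]
    simp only [Matrix.mul_assoc]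
  rw [← hM]
  exact psd_conj' hWpd.posSemidef _
end

section
/- Suppose there exists X > 0 and matrices G₁,…,G_s with X > Σ_{i=1}^s (A_i − G_i C) X (A_i − G_i C)ᵀ. Then the solutions of the Lyapunov-type difference equation X(k+1) = Σ_{i=1}^s (A_i − G_i C) X(k) (A_i − G_i C)ᵀ + G_i R G_iᵀ + Q are uniformly bounded above for any initial condition X(0) ≥ 0, where Q ≥ 0 and R ≥ 0 are fixed. -/
open Matrix Filter
open scoped MatrixOrder ComplexOrder

/-!
With `L Y = Σᵢ Fᵢ Y Fᵢᴴ` (`Fᵢ = Aᵢ - Gᵢ C`) and `S = Σᵢ Gᵢ R Gᵢᴴ + Q ⪰ 0`, the recursion is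
`X(k+1) = L X(k) + S`, whose right-hand side is monotone in the Loewner order. Since `X ≻ 0` and
`X - L X ≻ 0`, a large multiple `c X` dominates both `X(0)` and, through `c (X - L X) ⪰ S`, its own
image `L (c X) + S`; by monotonicity `c X` then bounds every `X(k)`.
-/

namespace Matrix

variable {𝕜 n : Type*} [RCLike 𝕜] [Fintype n]

lemma PosDef.exists_pos_smul_one_le [DecidableEq n] {P : Matrix n n 𝕜} (hP : P.PosDef) :
    ∃ r : ℝ, 0 < r ∧ r • (1 : Matrix n n 𝕜) ≤ P := by
  rcases subsingleton_or_nontrivial (Matrix n n 𝕜) with _ | _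
  · exact ⟨1, one_pos, (Subsingleton.elim _ P) ▸ le_rfl⟩
  simp_rw [← Algebra.algebraMap_eq_smul_one]
  exact (CFC.exists_pos_algebraMap_le_iff hP.isHermitian.isSelfAdjoint).2
    fun _ hx ↦ hP.isStrictlyPositive.spectrum_pos hx

lemma IsHermitian.exists_le_smul_one [DecidableEq n] {B : Matrix n n 𝕜} (hB : B.IsHermitian) :
    ∃ b : ℝ, B ≤ b • (1 : Matrix n n 𝕜) := by
  obtain ⟨b, hb⟩ := (finite_real_spectrum (A := B)).bddAbove
  exact ⟨b, Algebra.algebraMap_eq_smul_one (A := Matrix n n 𝕜) b ▸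
    le_algebraMap_of_spectrum_le hb hB.isSelfAdjoint⟩

lemma PosDef.eventually_le_smul [DecidableEq n] {P B : Matrix n n 𝕜} (hP : P.PosDef)
    (hB : B.IsHermitian) : ∀ᶠ c : ℝ in atTop, B ≤ c • P := by
  obtain ⟨r, hr, hrP⟩ := hP.exists_pos_smul_one_le
  obtain ⟨b, hBb⟩ := hB.exists_le_smul_one
  filter_upwards [eventually_ge_atTop (b / r), eventually_ge_atTop 0] with c hbc hc
  calc B ≤ b • (1 : Matrix n n 𝕜) := hBb
    _ ≤ (c * r) • (1 : Matrix n n 𝕜) :=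
        smul_le_smul_of_nonneg_right ((div_le_iff₀ hr).1 hbc) PosSemidef.one.nonneg
    _ = c • r • (1 : Matrix n n 𝕜) := mul_smul c r 1
    _ ≤ c • P := smul_le_smul_of_nonneg_left hrP hc

variable {ι : Type*} [Fintype ι]

lemma monotone_sum_conj_add (F : ι → Matrix n n 𝕜) (S : Matrix n n 𝕜) :
    Monotone fun Y ↦ ∑ i, F i * Y * (F i)ᴴ + S :=
  fun _ _ hYZ ↦ add_le_add
    (Finset.sum_le_sum fun i _ ↦ star_right_conjugate_le_conjugate hYZ (F i)) le_rfl

lemma sum_conj_smul_add_le {F : ι → Matrix n n 𝕜} {X S : Matrix n n 𝕜} {c : ℝ}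
    (h : S ≤ c • (X - ∑ i, F i * X * (F i)ᴴ)) :
    ∑ i, F i * (c • X) * (F i)ᴴ + S ≤ c • X := by
  have hscale : ∑ i, F i * (c • X) * (F i)ᴴ = c • ∑ i, F i * X * (F i)ᴴ := by
    simp only [Matrix.mul_smul, Matrix.smul_mul, Finset.smul_sum]
  rwa [hscale, ← le_sub_iff_add_le', ← smul_sub]

end Matrix

/-- If there exist `X > 0` and gains `G₁,…,G_s` with
`X > Σᵢ (Aᵢ − Gᵢ C) X (Aᵢ − Gᵢ C)ᵀ`, then the solutions of the Lyapunov-type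
difference equation
`X(k+1) = Σᵢ ((Aᵢ − Gᵢ C) X(k) (Aᵢ − Gᵢ C)ᵀ + Gᵢ R Gᵢᵀ) + Q`
are uniformly bounded above (in the Loewner order) for any initial condition
`X(0) ≥ 0`, where `Q ≥ 0` and `R ≥ 0`. -/
theorem lyapunov_recursion_bounded (n m s : ℕ)
    (A : Fin s → Matrix (Fin n) (Fin n) ℝ) (C : Matrix (Fin m) (Fin n) ℝ)
    (G : Fin s → Matrix (Fin n) (Fin m) ℝ)
    (Q : Matrix (Fin n) (Fin n) ℝ) (hQ : Q.PosSemidef)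
    (R : Matrix (Fin m) (Fin m) ℝ) (hR : R.PosSemidef)
    (X0 : Matrix (Fin n) (Fin n) ℝ)
    (hlyap : ∃ X : Matrix (Fin n) (Fin n) ℝ, X.PosDef ∧
      (X - ∑ i, (A i - G i * C) * X * (A i - G i * C)ᵀ).PosDef) :
    ∀ Xseq : ℕ → Matrix (Fin n) (Fin n) ℝ,
      Xseq 0 = X0 → X0.PosSemidef →
      (∀ k, Xseq (k + 1)
        = (∑ i, ((A i - G i * C) * Xseq k * (A i - G i * C)ᵀ + G i * R * (G i)ᵀ)) + Q) →
      ∃ M : Matrix (Fin n) (Fin n) ℝ, ∀ k, (M - Xseq k).PosSemidef := by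
  intro Xseq h0 hX0 hrec
  simp only [← conjTranspose_eq_transpose_of_trivial, Finset.sum_add_distrib, add_assoc]
    at hlyap hrec
  obtain ⟨X, hX, hdecay⟩ := hlyap
  set S := ∑ i, G i * R * (G i)ᴴ + Q
  have hS : S.PosSemidef :=
    (posSemidef_sum _ fun i _ ↦ hR.mul_mul_conjTranspose_same (G i)).add hQ
  obtain ⟨c, hX0c, hSc⟩ :=
    ((hX.eventually_le_smul hX0.isHermitian).and (hdecay.eventually_le_smul hS.isHermitian)).exists
  exact ⟨c • X, fun k ↦ (monotone_sum_conj_add (fun i ↦ A i - G i * C) S).seq_le_seq k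
    (h0 ▸ hX0c) (fun j _ ↦ (hrec j).le) fun _ _ ↦ sum_conj_smul_add_le hSc⟩
end

section
/- Let F, F_k ∈ ℝ^{n×n} with F_k → F as k → ∞ and ρ(F) < 1. Then the time-varying system e(k) = F_k e(k−1) + u(k) with uniformly bounded inputs ‖u(k)‖ ≤ c_u satisfies ‖e(k)‖ ≤ a b^k + c for some constants a ≥ 0, 0 ≤ b < 1, c ≥ 0; in particular if u ≡ 0 then ‖e(k)‖ ≤ a b^k. -/
open Matrix Filter Topology
open scoped ENNReal NNReal

/-!
By Gelfand's formula, `ρ(F) < 1` gives `‖F ^ m‖ ≤ θ ^ m` for some `m ≥ 1` and `θ < 1`. The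
weighted sum `N x = ∑_{j < m} ‖F ^ j x‖ / θ ^ j` is then a norm-like function, equivalent to
`‖x‖`, in which `F` contracts by the factor `θ`. Since `F_k → F`, eventually every `F_k`
contracts `N` by a fixed factor `β < 1`, so `N (e k)` obeys `N (e (k+1)) ≤ β N (e k) + const`,
and such a recursion is bounded by `a βᵏ + const / (1 - β)`.
-/

lemma exists_le_mul_pow_of_eventually_le_mul {y : ℕ → ℝ} {β : ℝ} (hβ : 0 < β)
    (h : ∀ᶠ k in atTop, y (k + 1) ≤ β * y k) : ∃ a, 0 ≤ a ∧ ∀ k, y k ≤ a * β ^ k := by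
  obtain ⟨K, hK⟩ := eventually_atTop.mp h
  set a := ∑ j ∈ Finset.range (K + 1), max (y j) 0 / β ^ j
  have ha : 0 ≤ a := Finset.sum_nonneg fun j _ => by positivity
  have hinit : ∀ k ≤ K, y k ≤ a * β ^ k := fun k hk => calc
    y k ≤ max (y k) 0 / β ^ k * β ^ k := by
      rw [div_mul_cancel₀ _ (by positivity)]
      exact le_max_left _ _
    _ ≤ a * β ^ k := by
      gcongr
      exact Finset.single_le_sum (f := fun j => max (y j) 0 / β ^ j) (fun j _ => by positivity)
        (Finset.mem_range.mpr (by omega))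
  refine ⟨a, ha, fun k => (le_total k K).elim (hinit k) fun hk => ?_⟩
  induction k, hk using Nat.le_induction with
  | base => exact hinit K le_rfl
  | succ k hk ih => calc
      y (k + 1) ≤ β * y k := hK k hk
      _ ≤ β * (a * β ^ k) := by gcongr
      _ = a * β ^ (k + 1) := by ring

lemma exists_le_mul_pow_add_of_eventually_le_mul_add {x : ℕ → ℝ} {β c : ℝ} (hβ0 : 0 < β)
    (hβ1 : β < 1) (h : ∀ᶠ k in atTop, x (k + 1) ≤ β * x k + c) :
    ∃ a, 0 ≤ a ∧ ∀ k, x k ≤ a * β ^ k + c / (1 - β) := by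
  -- `c / (1 - β)` is the fixed point of `t ↦ β t + c`.
  have hfix : β * (c / (1 - β)) + c = c / (1 - β) := by
    field_simp [(sub_pos.mpr hβ1).ne']
    ring
  obtain ⟨a, ha, hy⟩ := exists_le_mul_pow_of_eventually_le_mul (y := fun k => x k - c / (1 - β))
    hβ0 (h.mono fun k hk => by linarith)
  exact ⟨a, ha, fun k => by linarith [hy k]⟩

lemma eventually_norm_pow_lt_pow_of_spectralRadius_lt {A : Type*} [NormedRing A]
    [NormedAlgebra ℂ A] [CompleteSpace A] (a : A) {r : ℝ≥0} (hr : spectralRadius ℂ a < r) :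
    ∀ᶠ m : ℕ in atTop, ‖a ^ m‖ < r ^ m := by
  have hgelfand := spectrum.pow_nnnorm_pow_one_div_tendsto_nhds_spectralRadius a
  filter_upwards [hgelfand.eventually_lt_const hr, eventually_gt_atTop 0] with m hm hm0
  rw [one_div, ENNReal.rpow_inv_lt_iff (by positivity), ENNReal.rpow_natCast, ← ENNReal.coe_pow,
    ENNReal.coe_lt_coe] at hm
  exact_mod_cast hm

section LinftyOpNorm

-- The `ℓ∞` operator norm on matrices is the one induced by the sup norm on `ι → 𝕜`.
attribute [local instance] Matrix.linftyOpNormedAddCommGroup Matrix.linftyOpNormedRing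
  Matrix.linftyOpNormedAlgebra

variable {ι : Type*} [Fintype ι]

lemma Matrix.linfty_opNorm_map_ofReal {κ : Type*} [Fintype κ] (A : Matrix ι κ ℝ) :
    ‖A.map Complex.ofReal‖ = ‖A‖ := by
  simp [linfty_opNorm_def]

variable [DecidableEq ι]

lemma Matrix.exists_norm_pow_le_pow_of_spectralRadius_lt_one (A : Matrix ι ι ℝ)
    (hA : spectralRadius ℂ (A.map Complex.ofReal) < 1) :
    ∃ θ : ℝ, 0 < θ ∧ θ < 1 ∧ ∃ m, 1 ≤ m ∧ ‖A ^ m‖ ≤ θ ^ m := by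
  obtain ⟨t, hAt, ht1⟩ := ENNReal.lt_iff_exists_nnreal_btwn.mp hA
  obtain ⟨m, hm, hm1⟩ :=
    ((eventually_norm_pow_lt_pow_of_spectralRadius_lt _ hAt).and (eventually_ge_atTop 1)).exists
  refine ⟨t, ?_, by exact_mod_cast ht1, m, hm1, ?_⟩
  · exact_mod_cast ENNReal.coe_pos.mp (pos_of_gt hAt)
  · rw [← linfty_opNorm_map_ofReal, show (A ^ m).map Complex.ofReal = A.map Complex.ofReal ^ m from
      Matrix.map_pow A Complex.ofRealHom m]
    exact hm.le

section AdaptedNorm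

variable {𝕜 : Type*} [NormedField 𝕜]

noncomputable def adaptedNorm (A : Matrix ι ι 𝕜) (θ : ℝ) (m : ℕ) (x : ι → 𝕜) : ℝ :=
  ∑ j ∈ Finset.range m, ‖(A ^ j) *ᵥ x‖ / θ ^ j

noncomputable def adaptedNormBound (A : Matrix ι ι 𝕜) (θ : ℝ) (m : ℕ) : ℝ :=
  ∑ j ∈ Finset.range m, ‖A ^ j‖ / θ ^ j

variable {A : Matrix ι ι 𝕜} {θ : ℝ} {m : ℕ}

lemma adaptedNormBound_nonneg (hθ : 0 ≤ θ) : 0 ≤ adaptedNormBound A θ m :=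
  Finset.sum_nonneg fun _ _ => by positivity

lemma norm_le_adaptedNorm (hθ : 0 ≤ θ) (hm : 1 ≤ m) (x : ι → 𝕜) : ‖x‖ ≤ adaptedNorm A θ m x := by
  simpa [adaptedNorm] using Finset.single_le_sum (f := fun j => ‖(A ^ j) *ᵥ x‖ / θ ^ j)
    (fun _ _ => by positivity) (Finset.mem_range.mpr hm)

lemma adaptedNorm_le (hθ : 0 ≤ θ) (x : ι → 𝕜) :
    adaptedNorm A θ m x ≤ adaptedNormBound A θ m * ‖x‖ := by
  rw [adaptedNorm, adaptedNormBound, Finset.sum_mul]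
  gcongr with j
  rw [div_mul_eq_mul_div]
  gcongr
  exact linfty_opNorm_mulVec _ _

lemma adaptedNorm_add_le (hθ : 0 ≤ θ) (x y : ι → 𝕜) :
    adaptedNorm A θ m (x + y) ≤ adaptedNorm A θ m x + adaptedNorm A θ m y := by
  rw [adaptedNorm, adaptedNorm, adaptedNorm, ← Finset.sum_add_distrib]
  gcongr with j
  rw [mulVec_add, ← add_div]
  gcongr
  exact norm_add_le _ _

lemma adaptedNorm_mulVec_le (hθ : 0 < θ) (hA : ‖A ^ m‖ ≤ θ ^ m) (x : ι → 𝕜) :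
    adaptedNorm A θ m (A *ᵥ x) ≤ θ * adaptedNorm A θ m x := by
  set g : ℕ → ℝ := fun j => ‖(A ^ j) *ᵥ x‖ / θ ^ j
  have hshift : adaptedNorm A θ m (A *ᵥ x) = θ * ∑ j ∈ Finset.range m, g (j + 1) := by
    rw [adaptedNorm, Finset.mul_sum]
    refine Finset.sum_congr rfl fun j _ => ?_
    show _ = θ * (‖(A ^ (j + 1)) *ᵥ x‖ / θ ^ (j + 1))
    rw [mulVec_mulVec, ← pow_succ, pow_succ θ]
    field_simp
  have htelescope : ∑ j ∈ Finset.range m, g (j + 1) + g 0 = adaptedNorm A θ m x + g m := by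
    rw [← Finset.sum_range_succ', Finset.sum_range_succ]
    rfl
  -- the term that leaves the window is at most the one that enters it
  have hlast : g m ≤ g 0 := by
    simp only [g, pow_zero, one_mulVec, div_one]
    rw [div_le_iff₀ (by positivity)]
    calc ‖(A ^ m) *ᵥ x‖ ≤ ‖A ^ m‖ * ‖x‖ := linfty_opNorm_mulVec _ _
      _ ≤ θ ^ m * ‖x‖ := by gcongr
      _ = ‖x‖ * θ ^ m := mul_comm _ _
  rw [hshift]
  gcongr
  linarith

lemma adaptedNorm_mulVec_le_of_sub (hθ : 0 < θ) (hm : 1 ≤ m) (hA : ‖A ^ m‖ ≤ θ ^ m)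
    (B : Matrix ι ι 𝕜) (x : ι → 𝕜) :
    adaptedNorm A θ m (B *ᵥ x) ≤ (θ + adaptedNormBound A θ m * ‖B - A‖) * adaptedNorm A θ m x := by
  have hM : 0 ≤ adaptedNormBound A θ m := adaptedNormBound_nonneg hθ.le
  calc adaptedNorm A θ m (B *ᵥ x)
      = adaptedNorm A θ m (A *ᵥ x + (B - A) *ᵥ x) := by rw [sub_mulVec, add_sub_cancel]
    _ ≤ θ * adaptedNorm A θ m x + adaptedNormBound A θ m * (‖B - A‖ * ‖x‖) := by
      refine (adaptedNorm_add_le hθ.le _ _).trans (add_le_add (adaptedNorm_mulVec_le hθ hA x) ?_)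
      grw [adaptedNorm_le hθ.le, linfty_opNorm_mulVec]
    _ ≤ θ * adaptedNorm A θ m x + adaptedNormBound A θ m * (‖B - A‖ * adaptedNorm A θ m x) := by
      grw [norm_le_adaptedNorm hθ.le hm x]
    _ = (θ + adaptedNormBound A θ m * ‖B - A‖) * adaptedNorm A θ m x := by ring

variable {F : ℕ → Matrix ι ι 𝕜}

lemma exists_eventually_adaptedNorm_mulVec_le (hconv : Tendsto F atTop (𝓝 A)) (hθ0 : 0 < θ)
    (hθ1 : θ < 1) (hm : 1 ≤ m) (hA : ‖A ^ m‖ ≤ θ ^ m) :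
    ∃ β, 0 < β ∧ β < 1 ∧
      ∀ᶠ k in atTop, ∀ x, adaptedNorm A θ m (F k *ᵥ x) ≤ β * adaptedNorm A θ m x := by
  refine ⟨(1 + θ) / 2, by linarith, by linarith, ?_⟩
  have hsmall : ∀ᶠ k in atTop, adaptedNormBound A θ m * ‖F k - A‖ < (1 + θ) / 2 - θ := by
    have := (tendsto_iff_norm_sub_tendsto_zero.mp hconv).const_mul (adaptedNormBound A θ m)
    rw [mul_zero] at this
    exact this.eventually_lt_const (by linarith)
  filter_upwards [hsmall] with k hk x
  refine (adaptedNorm_mulVec_le_of_sub hθ0 hm hA (F k) x).trans ?_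
  gcongr
  · exact (norm_nonneg x).trans (norm_le_adaptedNorm hθ0.le hm x)
  · linarith

lemma exists_norm_le_mul_pow_add_mul_of_norm_pow_le (hconv : Tendsto F atTop (𝓝 A))
    (hθ0 : 0 < θ) (hθ1 : θ < 1) (hm : 1 ≤ m) (hA : ‖A ^ m‖ ≤ θ ^ m) {e u : ℕ → ι → 𝕜} {c : ℝ}
    (hu : ∀ k, ‖u k‖ ≤ c) (hrec : ∀ k, e (k + 1) = F (k + 1) *ᵥ e k + u (k + 1)) :
    ∃ a b C : ℝ, 0 ≤ a ∧ 0 ≤ b ∧ b < 1 ∧ 0 ≤ C ∧ ∀ k, ‖e k‖ ≤ a * b ^ k + C * c := by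
  set N := adaptedNorm A θ m
  set M := adaptedNormBound A θ m
  obtain ⟨β, hβ0, hβ1, hcontr⟩ := exists_eventually_adaptedNorm_mulVec_le hconv hθ0 hθ1 hm hA
  have hstep : ∀ᶠ k in atTop, N (e (k + 1)) ≤ β * N (e k) + M * c := by
    filter_upwards [(tendsto_add_atTop_nat 1).eventually hcontr] with k hk
    rw [hrec k]
    calc N (F (k + 1) *ᵥ e k + u (k + 1)) ≤ N (F (k + 1) *ᵥ e k) + N (u (k + 1)) :=
          adaptedNorm_add_le hθ0.le _ _
      _ ≤ β * N (e k) + M * c :=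
          add_le_add (hk _) ((adaptedNorm_le hθ0.le _).trans
            (mul_le_mul_of_nonneg_left (hu _) (adaptedNormBound_nonneg hθ0.le)))
  obtain ⟨a, ha, hbound⟩ := exists_le_mul_pow_add_of_eventually_le_mul_add
    (x := fun k => N (e k)) hβ0 hβ1 hstep
  refine ⟨a, β, M / (1 - β), ha, hβ0.le, hβ1,
    div_nonneg (adaptedNormBound_nonneg hθ0.le) (by linarith), fun k => ?_⟩
  calc ‖e k‖ ≤ N (e k) := norm_le_adaptedNorm hθ0.le hm _
    _ ≤ a * β ^ k + M * c / (1 - β) := hbound k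
    _ = a * β ^ k + M / (1 - β) * c := by ring

end AdaptedNorm

end LinftyOpNorm

/-- Let `F_k → F` with `ρ(F) < 1`. Then the time-varying system
`e(k) = F_k e(k−1) + u(k)` with uniformly bounded inputs `‖u(k)‖ ≤ c_u` satisfies
`‖e(k)‖ ≤ a bᵏ + c` for some `a ≥ 0`, `0 ≤ b < 1`, `c ≥ 0`; if moreover `u ≡ 0`,
then `‖e(k)‖ ≤ a bᵏ`. -/
theorem time_varying_exponential_bound (n : ℕ)
    (F : ℕ → Matrix (Fin n) (Fin n) ℝ) (Flim : Matrix (Fin n) (Fin n) ℝ)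
    (hconv : Tendsto F atTop (𝓝 Flim))
    (hρ : spectralRadius ℂ (Flim.map (Complex.ofReal)) < 1)
    (e u : ℕ → (Fin n → ℝ)) (cu : ℝ) (hu : ∀ k, ‖u k‖ ≤ cu)
    (hrec : ∀ k, e (k + 1) = (F (k + 1)).mulVec (e k) + u (k + 1)) :
    (∃ a b c : ℝ, 0 ≤ a ∧ 0 ≤ b ∧ b < 1 ∧ 0 ≤ c ∧
        ∀ k, ‖e k‖ ≤ a * b ^ k + c) ∧
      ((∀ k, u k = 0) → ∃ a b : ℝ, 0 ≤ a ∧ 0 ≤ b ∧ b < 1 ∧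
        ∀ k, ‖e k‖ ≤ a * b ^ k) := by
  obtain ⟨θ, hθ0, hθ1, m, hm, hFm⟩ :=
    Matrix.exists_norm_pow_le_pow_of_spectralRadius_lt_one Flim hρ
  refine ⟨?_, fun hu0 => ?_⟩
  · obtain ⟨a, b, C, ha, hb0, hb1, hC, he⟩ :=
      exists_norm_le_mul_pow_add_mul_of_norm_pow_le hconv hθ0 hθ1 hm hFm hu hrec
    exact ⟨a, b, C * cu, ha, hb0, hb1, mul_nonneg hC ((norm_nonneg _).trans (hu 0)), he⟩
  · obtain ⟨a, b, C, ha, hb0, hb1, -, he⟩ :=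
      exists_norm_le_mul_pow_add_mul_of_norm_pow_le hconv hθ0 hθ1 hm hFm (c := 0)
        (fun k => by simp [hu0 k]) hrec
    exact ⟨a, b, ha, hb0, hb1, by simpa using he⟩
end
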